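/- Let v be a complex ℓ'×ℓ matrix with ‖v‖ < 1 and define F_v(u) = v − (I − v v*)^{1/2} u (I − v* u)^{-1} (I − v* v)^{1/2} for ‖u‖ < 1. Then F_v is an involution on the open unit ball: F_v(F_v(u)) = u for every u with ‖u‖ < 1. -/

import Mathlib

open Matrix
open scoped Matrix.Norms.L2Operator ComplexOrder

/-- The positive semidefinite square root of a positive semidefinite matrix
(the definition `Matrix.PosSemidef.sqrt` of the older Mathlib, since removed). -/
noncomputable def Matrix.PosSemidef.sqrt {n 𝕜 : Type*} [RCLike 𝕜] [Fintype n] [DecidableEq n]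
    {A : Matrix n n 𝕜} (hA : A.PosSemidef) : Matrix n n 𝕜 :=
  hA.1.eigenvectorUnitary.1 * diagonal ((↑) ∘ Real.sqrt ∘ hA.1.eigenvalues) *
    (star hA.1.eigenvectorUnitary : Matrix n n 𝕜)

lemma Matrix.PosSemidef.sqrt_mul_self {n 𝕜 : Type*} [RCLike 𝕜] [Fintype n] [DecidableEq n]
    {A : Matrix n n 𝕜} (hA : A.PosSemidef) : hA.sqrt * hA.sqrt = A := by
  conv_rhs => rw [hA.1.spectral_theorem, Unitary.conjStarAlgAut_apply]
  have hU : (star hA.1.eigenvectorUnitary : Matrix n n 𝕜) * hA.1.eigenvectorUnitary.1 = 1 :=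
    Unitary.star_mul_self_of_mem (SetLike.coe_mem _)
  simp only [Matrix.PosSemidef.sqrt, mul_assoc]
  rw [← mul_assoc (star hA.1.eigenvectorUnitary : Matrix n n 𝕜) hA.1.eigenvectorUnitary.1, hU,
    one_mul, ← mul_assoc (diagonal _) (diagonal _), diagonal_mul_diagonal]
  congr 3
  ext i
  simp only [Function.comp_apply]
  rw [← RCLike.ofReal_mul, Real.mul_self_sqrt (hA.eigenvalues_nonneg i)]

lemma Matrix.PosSemidef.posSemidef_sqrt {n 𝕜 : Type*} [RCLike 𝕜] [Fintype n] [DecidableEq n]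
    {A : Matrix n n 𝕜} (hA : A.PosSemidef) : hA.sqrt.PosSemidef := by
  unfold Matrix.PosSemidef.sqrt
  rw [star_eq_conjTranspose]
  refine Matrix.PosSemidef.mul_mul_conjTranspose_same ?_ _
  rw [posSemidef_diagonal_iff]
  intro i
  simp only [Function.comp_apply]
  exact_mod_cast Real.sqrt_nonneg _


lemma diag_ctm_nonneg {a b : ℕ} (M : Matrix (Fin a) (Fin b) ℂ) (j : Fin b) :
    0 ≤ (Mᴴ * M).diag j := by
  rw [Matrix.diag_apply, Matrix.mul_apply]
  exact Finset.sum_nonneg fun i _ => by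
    simpa [Matrix.conjTranspose_apply] using star_mul_self_nonneg (M i j)

lemma trace_ctm_nonneg {a b : ℕ} (M : Matrix (Fin a) (Fin b) ℂ) :
    0 ≤ (Mᴴ * M).trace := by
  rw [Matrix.trace]
  exact Finset.sum_nonneg fun j _ => diag_ctm_nonneg M j

lemma eq_zero_of_trace_ctm_eq_zero {a b : ℕ} (M : Matrix (Fin a) (Fin b) ℂ)
    (h : (Mᴴ * M).trace = 0) : M = 0 := by
  rw [Matrix.trace, Finset.sum_eq_zero_iff_of_nonneg
    (fun j _ => diag_ctm_nonneg M j)] at h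
  ext i j
  have := h j (Finset.mem_univ j)
  rw [Matrix.diag_apply, Matrix.mul_apply,
    Finset.sum_eq_zero_iff_of_nonneg (fun i _ => by
      simpa [Matrix.conjTranspose_apply] using star_mul_self_nonneg (M i j))] at this
  have h2 := this i (Finset.mem_univ i)
  rw [Matrix.conjTranspose_apply] at h2
  have h3 : M i j * star (M i j) = 0 := by rw [mul_comm]; exact h2
  rw [Complex.star_def, Complex.mul_conj] at h3
  simpa using Complex.normSq_eq_zero.mp (by exact_mod_cast h3)

lemma sqrt_intertwine {l l' : ℕ} (v : Matrix (Fin l') (Fin l) ℂ)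
    (h1 : (1 - vᴴ * v).PosSemidef) (h2 : (1 - v * vᴴ).PosSemidef)
    (hdet : IsUnit (h1.sqrt).det) :
    v * h1.sqrt = h2.sqrt * v := by
  set A := h1.sqrt with hA
  set B := h2.sqrt with hB
  have hA2 : A * A = 1 - vᴴ * v := h1.sqrt_mul_self
  have hB2 : B * B = 1 - v * vᴴ := h2.sqrt_mul_self
  set X := v * A - B * v with hX
  -- key relation : B * X + X * A = 0
  have key : B * X + X * A = 0 := by
    rw [hX, Matrix.mul_sub, Matrix.sub_mul, Matrix.mul_assoc v A A, hA2,
      ← Matrix.mul_assoc B B v, hB2, Matrix.mul_sub, Matrix.sub_mul,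
      Matrix.mul_one, Matrix.one_mul, ← Matrix.mul_assoc, Matrix.mul_assoc v vᴴ v]
    abel
  -- decompositions of A and B
  set D := h2.posSemidef_sqrt.sqrt with hD
  have hD2 : D * D = B := h2.posSemidef_sqrt.sqrt_mul_self
  have hDH : Dᴴ = D := h2.posSemidef_sqrt.posSemidef_sqrt.1
  set E := h1.posSemidef_sqrt.sqrt with hE
  have hE2 : E * E = A := h1.posSemidef_sqrt.sqrt_mul_self
  have hEH : Eᴴ = E := h1.posSemidef_sqrt.posSemidef_sqrt.1
  -- traces
  have ht1 : ((D * X)ᴴ * (D * X)).trace = (Xᴴ * (B * X)).trace := by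
    rw [Matrix.conjTranspose_mul, hDH, Matrix.mul_assoc, ← Matrix.mul_assoc D D X, hD2]
  have ht2 : ((X * E)ᴴ * (X * E)).trace = (Xᴴ * (X * A)).trace := by
    have hXE2 : (X * E) * (E * Xᴴ) = (X * A) * Xᴴ := by
      rw [Matrix.mul_assoc X E (E * Xᴴ), ← Matrix.mul_assoc E E Xᴴ, hE2, ← Matrix.mul_assoc]
    rw [Matrix.conjTranspose_mul, hEH, Matrix.trace_mul_comm, hXE2,
      Matrix.trace_mul_comm Xᴴ (X * A)]
  have hsum : (Xᴴ * (B * X)).trace + (Xᴴ * (X * A)).trace = 0 := by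
    rw [← Matrix.trace_add, ← Matrix.mul_add, key, Matrix.mul_zero, Matrix.trace_zero]
  have h1' := trace_ctm_nonneg (D * X)
  have h2' := trace_ctm_nonneg (X * E)
  rw [ht1] at h1'; rw [ht2] at h2'
  have ht2z : ((X * E)ᴴ * (X * E)).trace = 0 := by
    rw [ht2]
    refine le_antisymm ?_ h2'
    rw [show (Xᴴ * (X * A)).trace = -(Xᴴ * (B * X)).trace from by linear_combination hsum]
    exact neg_nonpos.mpr h1'
  have hXE : X * E = 0 := eq_zero_of_trace_ctm_eq_zero _ ht2z
  have hXA : X * A = 0 := by rw [← hE2, ← Matrix.mul_assoc, hXE, Matrix.zero_mul]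
  have hX0 : X = 0 := by
    have := congrArg (· * A⁻¹) hXA
    simpa [Matrix.mul_assoc, Matrix.mul_nonsing_inv A hdet] using this
  rw [← sub_eq_zero]
  exact hX0

noncomputable def Fv {l l' : ℕ} (v : Matrix (Fin l') (Fin l) ℂ)
    (h1 : (1 - vᴴ * v).PosSemidef) (h2 : (1 - v * vᴴ).PosSemidef)
    (u : Matrix (Fin l') (Fin l) ℂ) : Matrix (Fin l') (Fin l) ℂ :=
  v - h2.sqrt * u * (1 - vᴴ * u)⁻¹ * h1.sqrt

theorem stmt_13 (l l' : ℕ) (v : Matrix (Fin l') (Fin l) ℂ) (hv : ‖v‖ < 1)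
    (h1 : (1 - vᴴ * v).PosSemidef) (h2 : (1 - v * vᴴ).PosSemidef) :
    ∀ u : Matrix (Fin l') (Fin l) ℂ, ‖u‖ < 1 →
      Fv v h1 h2 (Fv v h1 h2 u) = u := by
  intro u hu
  set A := h1.sqrt with hA
  set B := h2.sqrt with hB
  have hA2 : A * A = 1 - vᴴ * v := h1.sqrt_mul_self
  have hAH : Aᴴ = A := h1.posSemidef_sqrt.1
  have hB2 : B * B = 1 - v * vᴴ := h2.sqrt_mul_self
  have hBH : Bᴴ = B := h2.posSemidef_sqrt.1
  -- invertibility facts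
  have hnvv : ‖vᴴ * v‖ < 1 := by
    calc ‖vᴴ * v‖ ≤ ‖vᴴ‖ * ‖v‖ := Matrix.l2_opNorm_mul _ _
      _ = ‖v‖ * ‖v‖ := by rw [Matrix.l2_opNorm_conjTranspose]
      _ < 1 := by nlinarith [norm_nonneg v]
  have hnvu : ‖vᴴ * u‖ < 1 := by
    calc ‖vᴴ * u‖ ≤ ‖vᴴ‖ * ‖u‖ := Matrix.l2_opNorm_mul _ _
      _ = ‖v‖ * ‖u‖ := by rw [Matrix.l2_opNorm_conjTranspose]
      _ < 1 := by nlinarith [norm_nonneg v, norm_nonneg u]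
  have hUvv : IsUnit (1 - vᴴ * v) := ⟨Units.oneSub _ hnvv, rfl⟩
  have hUvu : IsUnit (1 - vᴴ * u) := ⟨Units.oneSub _ hnvu, rfl⟩
  have hdetA : IsUnit A.det := by
    have : IsUnit (A.det * A.det) := by
      rw [← Matrix.det_mul, hA2]
      exact hUvv.map Matrix.detMonoidHom
    exact isUnit_of_mul_isUnit_left this
  have hdetC : IsUnit (1 - vᴴ * u).det := (Matrix.isUnit_iff_isUnit_det _).mp hUvu
  set C := (1 - vᴴ * u)⁻¹ with hC
  have hCr : (1 - vᴴ * u) * C = 1 := Matrix.mul_nonsing_inv _ hdetC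
  have hCl : C * (1 - vᴴ * u) = 1 := Matrix.nonsing_inv_mul _ hdetC
  have hAAi : A * A⁻¹ = 1 := Matrix.mul_nonsing_inv _ hdetA
  have hAiA : A⁻¹ * A = 1 := Matrix.nonsing_inv_mul _ hdetA
  have hcomm : v * A = B * v := sqrt_intertwine v h1 h2 hdetA
  have hcommT : A * vᴴ = vᴴ * B := by
    have := congrArg Matrix.conjTranspose hcomm
    rwa [Matrix.conjTranspose_mul, Matrix.conjTranspose_mul, hAH, hBH] at this
  set w := Fv v h1 h2 u with hw
  have hwdef : w = v - B * u * C * A := rfl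
  -- C = 1 + vᴴ * u * C
  have hCid : C = 1 + vᴴ * u * C := by
    have h := hCr
    rw [Matrix.sub_mul, Matrix.one_mul, sub_eq_iff_eq_add] at h
    exact h
  -- 1 - vᴴ * w = A * C * A
  have hw1 : 1 - vᴴ * w = A * C * A := by
    conv_rhs => rw [hCid]
    rw [hwdef]
    simp only [Matrix.mul_add, Matrix.add_mul, Matrix.mul_sub, Matrix.sub_mul,
      Matrix.mul_one, Matrix.one_mul, Matrix.mul_assoc]
    rw [hA2, ← Matrix.mul_assoc A vᴴ (u * (C * A)), hcommT,
      Matrix.mul_assoc vᴴ B (u * (C * A))]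
    abel
  -- inverse of 1 - vᴴ * w
  have hw2 : (1 - vᴴ * w)⁻¹ = A⁻¹ * (1 - vᴴ * u) * A⁻¹ := by
    apply Matrix.inv_eq_right_inv
    rw [hw1]
    calc A * C * A * (A⁻¹ * (1 - vᴴ * u) * A⁻¹)
        = A * (C * ((A * A⁻¹) * ((1 - vᴴ * u) * A⁻¹))) := by
          simp only [Matrix.mul_assoc]
      _ = A * (C * ((1 - vᴴ * u) * A⁻¹)) := by rw [hAAi, Matrix.one_mul]
      _ = A * ((C * (1 - vᴴ * u)) * A⁻¹) := by simp only [Matrix.mul_assoc]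
      _ = 1 := by rw [hCl, Matrix.one_mul, hAAi]
  -- final computation
  show v - B * w * (1 - vᴴ * w)⁻¹ * A = u
  rw [hw2, hwdef]
  have hkey : B * (v - B * u * C * A) * (A⁻¹ * (1 - vᴴ * u) * A⁻¹) * A = v - u := by
    calc B * (v - B * u * C * A) * (A⁻¹ * (1 - vᴴ * u) * A⁻¹) * A
        = (B * v - (B * B) * (u * (C * A))) * (A⁻¹ * ((1 - vᴴ * u) * ((A⁻¹) * A))) := by
          simp only [Matrix.mul_sub, Matrix.sub_mul, Matrix.mul_assoc]
      _ = (v * A - (1 - v * vᴴ) * (u * (C * A))) * (A⁻¹ * (1 - vᴴ * u)) := by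
          rw [hAiA, Matrix.mul_one, ← hcomm, hB2]
      _ = v * ((A * A⁻¹) * (1 - vᴴ * u)) -
            (1 - v * vᴴ) * (u * (C * ((A * A⁻¹) * (1 - vᴴ * u)))) := by
          simp only [Matrix.mul_sub, Matrix.sub_mul, Matrix.mul_assoc]
          abel
      _ = v * (1 - vᴴ * u) - (1 - v * vᴴ) * (u * (C * (1 - vᴴ * u))) := by
          rw [hAAi, Matrix.one_mul]
      _ = v * (1 - vᴴ * u) - (1 - v * vᴴ) * u := by rw [hCl, Matrix.mul_one]
      _ = v - u := by
          simp only [Matrix.mul_sub, Matrix.sub_mul, Matrix.mul_one, Matrix.one_mul,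
            Matrix.mul_assoc]
          abel
  rw [hkey]
  abel
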